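/- In the DMH' game every deterministic 1-bit strategy that avoids the forbidden entries has expected payoff ≤ 0; hence every convex combination of deterministic 1-bit strategies (1 cbit + shared randomness) avoiding forbidden entries has payoff ≤ 0. -/
import Mathlib

def detStrategy (E : Fin 4 → Fin 2) (D : Fin 2 → Fin 4) : Fin 4 → Fin 4 → ℝ :=
  fun m z => if D (E m) = z then 1 else 0

def dmh'Forbidden : Finset (Fin 4 × Fin 4) :=
  {(0,3), (1,0), (2,2), (2,3), (3,0), (3,1)}

noncomputable def dmh'Payoff (S : Fin 4 → Fin 4 → ℝ) : ℝ :=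
  (1/4) * (-(S 0 0) - S 1 2 + S 2 0)

noncomputable def slack (S : Fin 4 → Fin 4 → ℝ) : ℝ :=
  (1/4) * (S 0 3 + S 1 0 + S 2 2 + S 2 3 + S 3 0 + S 3 1) - dmh'Payoff S

lemma det_helper (E : Fin 4 → Fin 2) (D : Fin 2 → Fin 4) :
    D (E 2) ≠ 0 ∨ D (E 0) = 0 ∨ D (E 1) = 2 ∨ D (E 0) = 3 ∨ D (E 1) = 0 ∨
      D (E 3) = 0 ∨ D (E 3) = 1 := by
  revert E D
  decide

lemma det_bounds (E : Fin 4 → Fin 2) (D : Fin 2 → Fin 4) (i j : Fin 4) :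
    0 ≤ detStrategy E D i j ∧ detStrategy E D i j ≤ 1 := by
  unfold detStrategy
  split <;> norm_num

lemma det_eq_one (E : Fin 4 → Fin 2) (D : Fin 2 → Fin 4) {i j : Fin 4}
    (h : D (E i) = j) : detStrategy E D i j = 1 := by simp [detStrategy, h]

lemma det_eq_zero (E : Fin 4 → Fin 2) (D : Fin 2 → Fin 4) {i j : Fin 4}
    (h : D (E i) ≠ j) : detStrategy E D i j = 0 := by simp [detStrategy, h]

lemma det_slack (E : Fin 4 → Fin 2) (D : Fin 2 → Fin 4) :
    0 ≤ slack (detStrategy E D) := by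
  obtain ⟨n00, b00⟩ := det_bounds E D 0 0
  obtain ⟨n12, b12⟩ := det_bounds E D 1 2
  obtain ⟨n20, b20⟩ := det_bounds E D 2 0
  obtain ⟨n03, _⟩ := det_bounds E D 0 3
  obtain ⟨n10, _⟩ := det_bounds E D 1 0
  obtain ⟨n22, _⟩ := det_bounds E D 2 2
  obtain ⟨n23, _⟩ := det_bounds E D 2 3
  obtain ⟨n30, _⟩ := det_bounds E D 3 0
  obtain ⟨n31, _⟩ := det_bounds E D 3 1
  unfold slack dmh'Payoff
  rcases det_helper E D with h | h | h | h | h | h | h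
  · have := det_eq_zero E D h; linarith
  · have := det_eq_one E D h; linarith
  · have := det_eq_one E D h; linarith
  · have := det_eq_one E D h; linarith
  · have := det_eq_one E D h; linarith
  · have := det_eq_one E D h; linarith
  · have := det_eq_one E D h; linarith

lemma convex_slack : Convex ℝ {S : Fin 4 → Fin 4 → ℝ | 0 ≤ slack S} := by
  intro S1 hS1 S2 hS2 a b ha hb hab
  simp only [Set.mem_setOf_eq, slack, dmh'Payoff] at *
  simp only [Pi.add_apply, Pi.smul_apply, smul_eq_mul]
  nlinarith [mul_le_mul_of_nonneg_left hS1 ha, mul_le_mul_of_nonneg_left hS2 hb]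

/-- in the DMH' game every deterministic 1-bit strategy avoiding
forbidden entries has payoff ≤ 0, and so does every convex combination of
deterministic 1-bit strategies (1 cbit + shared randomness) avoiding forbidden
entries. -/
theorem dmh'_classical_payoff_nonpos :
    (∀ (E : Fin 4 → Fin 2) (D : Fin 2 → Fin 4),
      (∀ p ∈ dmh'Forbidden, detStrategy E D p.1 p.2 = 0) →
        dmh'Payoff (detStrategy E D) ≤ 0) ∧
    (∀ S : Fin 4 → Fin 4 → ℝ,
      S ∈ convexHull ℝ {s | ∃ E D, s = detStrategy E D} →
      (∀ p ∈ dmh'Forbidden, S p.1 p.2 = 0) →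
        dmh'Payoff S ≤ 0) := by
  have key : ∀ S : Fin 4 → Fin 4 → ℝ, 0 ≤ slack S →
      (∀ p ∈ dmh'Forbidden, S p.1 p.2 = 0) → dmh'Payoff S ≤ 0 := by
    intro S hs hf
    have e1 := hf (0,3) (by decide)
    have e2 := hf (1,0) (by decide)
    have e3 := hf (2,2) (by decide)
    have e4 := hf (2,3) (by decide)
    have e5 := hf (3,0) (by decide)
    have e6 := hf (3,1) (by decide)
    simp only at e1 e2 e3 e4 e5 e6
    simp only [slack] at hs
    rw [e1, e2, e3, e4, e5, e6] at hs
    linarith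
  constructor
  · intro E D hf
    exact key _ (det_slack E D) hf
  · intro S hS hf
    refine key S ?_ hf
    have : S ∈ {S : Fin 4 → Fin 4 → ℝ | 0 ≤ slack S} := by
      refine convexHull_min ?_ convex_slack hS
      rintro s ⟨E, D, rfl⟩
      exact det_slack E D
    exact this
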